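/- Let q be a prime power, k < n ≤ m, α_1,...,α_n ∈ F_{q^m} linearly independent over F_q, η ∈ F_{q^m}*, 0 ≤ h ≤ k-1. Let C₁ be the one-twist twisted Gabidulin code with t = 0 as above, and for g ∈ F_{q^m}* and f ∈ P₁ (where P₁ = {∑_{i=0}^{k-1} f_i x^{q^i} + η f_h x^{q^k}}), set g(x) = g·x^{q^k} + f(x) and u_g = (g(α_1),...,g(α_n)). Then u_g is a deep hole of C₁, i.e., min over c ∈ C₁ of the rank weight of u_g - c equals the covering radius n - k of C₁. -/

import Mathlib

/-!
The word `u_g` and every codeword of `C₁` are evaluations at the `α_j` of `q`-linearized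
polynomials of `q`-degree at most `k`. Their difference is never the zero polynomial: its
coefficients at `x^{q^h}` and `x^{q^k}` are `e` and `g + η e` for some `e`, with `g ≠ 0`.
A nonzero linearized polynomial of `q`-degree `k` has at most `q^k` roots, so its kernel is an
`F_q`-space of dimension `≤ k`, and it maps the `n`-dimensional span of the `α_j` onto a space of
dimension `≥ n - k`. Conversely `C₁` has dimension `k` (by the same root count), so some codeword
agrees with `u_g` in `k` coordinates, and the rank weight never exceeds the Hamming weight.
-/

open Finset Polynomial

noncomputable def rankWeight (F : Type*) {V ι : Type*} [Field F] [AddCommGroup V] [Module F V]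
    (v : ι → V) : ℕ :=
  Module.finrank F (Submodule.span F (Set.range v))

theorem rankWeight_le_hammingNorm {F V ι : Type*} [Field F] [AddCommGroup V] [Module F V]
    [Fintype ι] [DecidableEq V] (v : ι → V) :
    rankWeight F v ≤ hammingNorm v := by
  set S := ({j | v j ≠ 0} : Finset ι)
  have hle : Submodule.span F (Set.range v) ≤ Submodule.span F ↑(S.image v) := by
    refine Submodule.span_le.mpr ?_
    rintro _ ⟨j, rfl⟩
    by_cases hj : v j = 0
    · exact hj ▸ Submodule.zero_mem _
    · exact Submodule.subset_span (mem_image_of_mem v (by simpa [S] using hj))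
  calc rankWeight F v
      ≤ Module.finrank F (Submodule.span F (↑(S.image v) : Set V)) := Submodule.finrank_mono hle
    _ ≤ #(S.image v) := finrank_span_finset_le_card _
    _ ≤ hammingNorm v := card_image_le

theorem Submodule.exists_hammingNorm_sub_le {K ι : Type*} [Field K] [Fintype ι] [DecidableEq K]
    (W : Submodule K (ι → K)) (u : ι → K) :
    ∃ c ∈ W, hammingNorm (u - c) ≤ Fintype.card ι - Module.finrank K W := by
  classical
  set e : ι → (ι → K) ⧸ W := W.mkQ ∘ Pi.basisFun K ι
  have hspan : span K (Set.range e) = ⊤ := by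
    rw [Set.range_comp, span_image, (Pi.basisFun K ι).span_eq, map_top, range_mkQ]
  -- the unit vectors indexed by `a` project to a basis of `K^ι ⧸ W`, so `u` is congruent mod `W`
  -- to a vector supported on `range a`
  obtain ⟨κ, a, ha, hsp, hli⟩ := exists_linearIndependent' K e
  have := Finite.of_injective a ha
  have := Fintype.ofFinite κ
  have hκ : Fintype.card κ = Fintype.card ι - Module.finrank K W := by
    have := W.finrank_quotient_add_finrank
    rw [Module.finrank_fintype_fun_eq_card] at this
    rw [linearIndependent_iff_card_eq_finrank_span.mp hli, Set.finrank, hsp, hspan, finrank_top]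
    omega
  obtain ⟨x, hx⟩ :=
    mem_span_range_iff_exists_fun K |>.mp (hsp ▸ hspan ▸ mem_top (x := W.mkQ u))
  set v := ∑ l, x l • Pi.basisFun K ι (a l)
  have hv : u - v ∈ W := by
    rw [← Quotient.eq, ← mkQ_apply, ← mkQ_apply, ← hx]
    simp [v, e, map_sum]
  refine ⟨u - v, hv, ?_⟩
  rw [sub_sub_cancel, ← hκ, ← card_univ, ← card_image_of_injective _ ha]
  refine card_le_card fun j hj => ?_
  contrapose! hj
  simp only [mem_filter, mem_univ, true_and, not_not, v, Finset.sum_apply, Pi.smul_apply,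
    Pi.basisFun_apply, Pi.single_apply, smul_eq_mul, mul_ite, mul_one, mul_zero]
  exact sum_eq_zero fun l _ => if_neg fun h : j = a l => hj (h ▸ mem_image_of_mem a (mem_univ l))

theorem Submodule.finrank_sub_finrank_ker_le_finrank_map {F V W : Type*} [Field F]
    [AddCommGroup V] [Module F V] [AddCommGroup W] [Module F W] [FiniteDimensional F V]
    (f : V →ₗ[F] W) (U : Submodule F V) :
    Module.finrank F U - Module.finrank F (LinearMap.ker f) ≤ Module.finrank F (U.map f) := by
  have hrank := (f.domRestrict U).finrank_range_add_finrank_ker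
  have hker : Module.finrank F (LinearMap.ker (f.domRestrict U)) ≤
      Module.finrank F (LinearMap.ker f) := by
    rw [← finrank_map_subtype_eq]
    exact finrank_mono fun x ⟨y, hy, hyx⟩ => hyx ▸ hy
  rw [LinearMap.range_domRestrict] at hrank
  omega

section Linearized

variable {Fq K : Type*} [Field Fq] [Fintype Fq] [Field K] [Algebra Fq K] {N : ℕ}

noncomputable def linearizedMap (b : Fin (N + 1) → K) : K →ₗ[Fq] K :=
  ∑ i, b i • ((FiniteField.frobeniusAlgHom Fq K) ^ (i : ℕ)).toLinearMap

theorem linearizedMap_apply (b : Fin (N + 1) → K) (x : K) :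
    linearizedMap (Fq := Fq) b x = ∑ i, b i * x ^ Fintype.card Fq ^ (i : ℕ) := by
  simp [linearizedMap, AlgHom.coe_pow, FiniteField.coe_frobeniusAlgHom, pow_iterate]

theorem linearizedMap_sub (b b' : Fin (N + 1) → K) :
    linearizedMap (Fq := Fq) (b - b') = linearizedMap b - linearizedMap b' := by
  ext x
  simp [linearizedMap_apply, sub_mul]

variable [Finite K]

theorem finrank_ker_linearizedMap_le {b : Fin (N + 1) → K} (hb : b ≠ 0) :
    Module.finrank Fq (LinearMap.ker (linearizedMap (Fq := Fq) b)) ≤ N := by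
  set q := Fintype.card Fq
  have hq : 1 < q := Fintype.one_lt_card
  set P : K[X] := ∑ i, C (b i) * X ^ q ^ (i : ℕ)
  have hP : P ≠ 0 := by
    obtain ⟨i₀, hi₀⟩ := Function.ne_iff.mp hb
    have hcoeff : P.coeff (q ^ (i₀ : ℕ)) = b i₀ := by
      rw [finsetSum_coeff, Finset.sum_eq_single i₀, coeff_C_mul_X_pow, if_pos rfl]
      · intro i _ hi
        rw [coeff_C_mul_X_pow, if_neg]
        exact fun h => hi (Fin.ext (Nat.pow_right_injective hq h.symm))
      · simp
    exact fun h => hi₀ (by rw [← hcoeff, h, coeff_zero, Pi.zero_apply])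
  have hdeg : P.natDegree ≤ q ^ N := by
    refine natDegree_sum_le_of_forall_le _ _ fun i _ => (natDegree_C_mul_X_pow_le _ _).trans ?_
    exact Nat.pow_le_pow_right (by omega) (Nat.lt_succ_iff.mp i.isLt)
  have hroots : ∀ x : LinearMap.ker (linearizedMap (Fq := Fq) b), P.eval (x : K) = 0 := by
    rintro ⟨x, hx⟩
    rw [LinearMap.mem_ker, linearizedMap_apply] at hx
    simpa [P, eval_finsetSum] using hx
  have := Fintype.ofFinite (LinearMap.ker (linearizedMap (Fq := Fq) b))
  by_contra! hN
  refine hP (eq_zero_of_natDegree_lt_card_of_eval_eq_zero P Subtype.val_injective hroots ?_)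
  rw [Module.card_eq_pow_finrank (K := Fq)]
  exact hdeg.trans_lt (Nat.pow_lt_pow_right hq hN)

theorem sub_le_rankWeight_linearizedMap {ι : Type*} [Fintype ι] {α : ι → K}
    (hα : LinearIndependent Fq α) {b : Fin (N + 1) → K} (hb : b ≠ 0) :
    Fintype.card ι - N ≤ rankWeight Fq fun j => linearizedMap (Fq := Fq) b (α j) := by
  have hker := finrank_ker_linearizedMap_le (Fq := Fq) hb
  have hmap := Submodule.finrank_sub_finrank_ker_le_finrank_map (linearizedMap (Fq := Fq) b)
    (Submodule.span Fq (Set.range α))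
  rw [finrank_span_eq_card hα, Submodule.map_span, ← Set.range_comp] at hmap
  exact (Nat.sub_le_sub_left hker _).trans hmap

end Linearized

section TwistedGabidulin

variable (Fq : Type*) {K ι : Type*} [Field Fq] [Fintype Fq] [Field K] [Algebra Fq K]

def twistedRow (k h : ℕ) (η : K) (α : ι → K) (i : Fin k) : ι → K :=
  fun j => if (i : ℕ) = h then α j ^ Fintype.card Fq ^ h + η * α j ^ Fintype.card Fq ^ k
    else α j ^ Fintype.card Fq ^ (i : ℕ)

def twistedWord (k h : ℕ) (η g : K) (α : ι → K) (f : ℕ → K) : ι → K :=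
  fun j => g * α j ^ Fintype.card Fq ^ k +
    ((∑ i ∈ range k, f i * α j ^ Fintype.card Fq ^ i) + η * f h * α j ^ Fintype.card Fq ^ k)

def twistedGabidulinCode (k h : ℕ) (η : K) (α : ι → K) : Submodule K (ι → K) :=
  Submodule.span K (Set.range (twistedRow Fq k h η α))

variable {Fq} {k h : ℕ}

theorem sum_smul_twistedRow (hh : h < k) (η : K) (α : ι → K) (d : Fin k → K) :
    ∑ i, d i • twistedRow Fq k h η α i =
      fun j => linearizedMap (Fq := Fq) (Fin.snoc d (η * d ⟨h, hh⟩)) (α j) := by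
  funext j
  simp only [Finset.sum_apply, Pi.smul_apply, twistedRow, smul_eq_mul, mul_ite,
    linearizedMap_apply, Fin.sum_univ_castSucc, Fin.snoc_castSucc, Fin.val_castSucc,
    Fin.snoc_last, Fin.val_last]
  rw [Fintype.sum_eq_add_sum_compl ⟨h, hh⟩, if_pos rfl,
    Fintype.sum_eq_add_sum_compl ⟨h, hh⟩ fun c => d c * α j ^ Fintype.card Fq ^ (c : ℕ),
    sum_congr rfl fun c hc => if_neg fun hch => mem_compl.mp hc (mem_singleton.mpr (Fin.ext hch))]
  ring

theorem twistedWord_eq_linearizedMap (η g : K) (α : ι → K) (f : ℕ → K) :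
    twistedWord Fq k h η g α f =
      fun j =>
        linearizedMap (Fq := Fq) (Fin.snoc (fun i : Fin k => f i) (g + η * f h)) (α j) := by
  funext j
  simp only [twistedWord, linearizedMap_apply, Fin.sum_univ_castSucc, Fin.snoc_castSucc,
    Fin.val_castSucc, Fin.sum_univ_eq_sum_range (fun i => f i * α j ^ Fintype.card Fq ^ i),
    Fin.snoc_last, Fin.val_last]
  ring

variable [Finite K] [Fintype ι] {α : ι → K}

theorem linearIndependent_twistedRow (hα : LinearIndependent Fq α) (hk : k < Fintype.card ι)
    (hh : h < k) (η : K) : LinearIndependent K (twistedRow Fq k h η α) := by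
  rw [Fintype.linearIndependent_iff]
  intro d hd
  rw [sum_smul_twistedRow hh] at hd
  by_contra hne
  set b : Fin (k + 1) → K := Fin.snoc d (η * d ⟨h, hh⟩)
  have hb : b ≠ 0 := fun hb => hne fun i => by simpa [b] using congrFun hb i.castSucc
  have hker : Submodule.span Fq (Set.range α) ≤ LinearMap.ker (linearizedMap (Fq := Fq) b) :=
    Submodule.span_le.mpr (Set.range_subset_iff.mpr fun j => congrFun hd j)
  have := (Submodule.finrank_mono hker).trans (finrank_ker_linearizedMap_le hb)
  rw [finrank_span_eq_card hα] at this
  omega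

theorem isLeast_rankWeight_sub_twistedGabidulinCode (hα : LinearIndependent Fq α)
    (hk : k < Fintype.card ι) (hh : h < k) (η : K) {g : K} (hg : g ≠ 0) (f : ℕ → K) :
    IsLeast {w | ∃ c ∈ twistedGabidulinCode Fq k h η α,
      w = rankWeight Fq (twistedWord Fq k h η g α f - c)} (Fintype.card ι - k) := by
  classical
  rw [twistedWord_eq_linearizedMap]
  set a : Fin (k + 1) → K := Fin.snoc (fun i : Fin k => f i) (g + η * f h)
  have hlower : ∀ c ∈ twistedGabidulinCode Fq k h η α,
      Fintype.card ι - k ≤ rankWeight Fq ((fun j => linearizedMap (Fq := Fq) a (α j)) - c) := by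
    intro c hc
    obtain ⟨d, rfl⟩ := (Submodule.mem_span_range_iff_exists_fun K).mp hc
    rw [sum_smul_twistedRow hh]
    set b : Fin (k + 1) → K := Fin.snoc d (η * d ⟨h, hh⟩)
    have hdiff : (fun j => linearizedMap (Fq := Fq) a (α j)) -
        (fun j => linearizedMap (Fq := Fq) b (α j)) =
        fun j => linearizedMap (Fq := Fq) (a - b) (α j) := by
      funext j
      simp [linearizedMap_sub]
    rw [hdiff]
    refine sub_le_rankWeight_linearizedMap hα fun hab => hg ?_
    have hcoeff_h := congrFun hab (Fin.castSucc ⟨h, hh⟩)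
    have hcoeff_k := congrFun hab (Fin.last k)
    simp only [Pi.sub_apply, Pi.zero_apply, a, b, Fin.snoc_castSucc, Fin.snoc_last]
      at hcoeff_h hcoeff_k
    linear_combination hcoeff_k - η * hcoeff_h
  obtain ⟨c, hc, hnorm⟩ := (twistedGabidulinCode Fq k h η α).exists_hammingNorm_sub_le
    fun j => linearizedMap (Fq := Fq) a (α j)
  rw [twistedGabidulinCode, finrank_span_eq_card (linearIndependent_twistedRow hα hk hh η),
    Fintype.card_fin] at hnorm
  have hupper := (rankWeight_le_hammingNorm (F := Fq) _).trans hnorm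
  refine ⟨⟨c, hc, le_antisymm (hlower c hc) hupper⟩, ?_⟩
  rintro w ⟨c, hc, rfl⟩
  exact hlower c hc

end TwistedGabidulin

theorem C1_deep_hole_general {Fq K : Type*} [Field Fq] [Fintype Fq] [Field K] [Fintype K]
    [Algebra Fq K] (q n k h : ℕ) (hq : Fintype.card Fq = q)
    (hkn : k < n) (hh : h < k)
    (α : ℕ → K) (hα : LinearIndependent Fq (fun i : Fin n => α (i:ℕ)))
    (η : K) (g : K) (hg : g ≠ 0) (fc : ℕ → K) :
    sInf {w : ℕ | ∃ c ∈ Submodule.span K (Set.range (fun i : Fin k => fun j : Fin n =>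
          if (i:ℕ) = h then α (j:ℕ) ^ q ^ h + η * α (j:ℕ) ^ q ^ k
          else α (j:ℕ) ^ q ^ (i:ℕ))),
        w = Module.finrank Fq (Submodule.span Fq (Set.range
          ((fun j : Fin n => g * α (j:ℕ) ^ q ^ k +
            ((∑ i ∈ Finset.range k, fc i * α (j:ℕ) ^ q ^ i) + η * fc h * α (j:ℕ) ^ q ^ k))
            - c)))} = n - k := by
  subst hq
  have hdeep := (isLeast_rankWeight_sub_twistedGabidulinCode hα
    (by rwa [Fintype.card_fin]) hh η hg fc).csInf_eq
  rwa [Fintype.card_fin] at hdeep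

/-- for `g(x) = g·x^{q^k} + f(x)` with `g ≠ 0` and `f ∈ P₁`, the vector
`u_g = (g(α_1),…,g(α_n))` is a deep hole of the one-twist twisted Gabidulin code `C₁`
(with `t = 0`): its rank distance to `C₁` equals the covering radius `n - k`. -/
theorem C1_deep_hole {Fq K : Type*} [Field Fq] [Fintype Fq] [Field K] [Fintype K]
    [Algebra Fq K] (q m n k h : ℕ) (hq : Fintype.card Fq = q) (hK : Fintype.card K = q ^ m)
    (hkn : k < n) (hnm : n ≤ m) (hh : h < k)
    (α : ℕ → K) (hα : LinearIndependent Fq (fun i : Fin n => α (i:ℕ)))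
    (η : K) (hη : η ≠ 0) (g : K) (hg : g ≠ 0) (fc : ℕ → K) :
    sInf {w : ℕ | ∃ c ∈ Submodule.span K (Set.range (fun i : Fin k => fun j : Fin n =>
          if (i:ℕ) = h then α (j:ℕ) ^ q ^ h + η * α (j:ℕ) ^ q ^ k
          else α (j:ℕ) ^ q ^ (i:ℕ))),
        w = Module.finrank Fq (Submodule.span Fq (Set.range
          ((fun j : Fin n => g * α (j:ℕ) ^ q ^ k +
            ((∑ i ∈ Finset.range k, fc i * α (j:ℕ) ^ q ^ i) + η * fc h * α (j:ℕ) ^ q ^ k))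
            - c)))} = n - k :=
  C1_deep_hole_general q n k h hq hkn hh α hα η g hg fc
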